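/- Under the hypotheses α ± β ∉ ℤ, ψ(b) ≠ 0, and φ|_{d_0 ⊗ ⟨b⟩} = 0, the highest weight vector v_φ of V(φ) satisfies (d_{-1} ⊗ b) · v_φ = 0. -/

import Mathlib

/-!
The vectors obtained from `(d_{-1} ⊗ c) v_φ`, `c ∈ ⟨b⟩`, by applying negative modes `d_n ⊗ a`
span a `Vir_B`-submodule: commuting a mode past the negative ones reduces this to
`(d_k ⊗ a)(d_{-1} ⊗ c) v_φ = 0` for `k ≥ 2`, `(d_1 ⊗ a)(d_{-1} ⊗ c) v_φ = -2 φ(d_0 ⊗ ac) v_φ = 0`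
and `(d_0 ⊗ a)(d_{-1} ⊗ c) v_φ = φ(d_0 ⊗ a) (d_{-1} ⊗ c) v_φ - (d_{-1} ⊗ ac) v_φ`, while the
centre acts by scalars. All these vectors are `d_0 ⊗ 1`-eigenvectors of eigenvalue strictly
below `φ(d_0 ⊗ 1)`, so the submodule misses `v_φ`; by irreducibility it is zero.
-/

open Finsupp TensorProduct

noncomputable section

/-- Loop-Virasoro carrier: `Vir ⊗ B ≅ (⊕_{n∈ℤ} d_n ⊗ B) ⊕ (C ⊗ B)`. -/
abbrev LVir (B : Type*) [AddCommMonoid B] : Type _ := (ℤ →₀ B) × B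

variable (B : Type*) [CommRing B] [Algebra ℂ B]

/-- `[d_m ⊗ a, d_n ⊗ b] = (n-m) d_{m+n} ⊗ ab + δ_{m,-n} ((m³-m)/12) C ⊗ ab`. -/
def ldBracket (m n : ℤ) (a b : B) : LVir B :=
  (Finsupp.single (m + n) ((((n : ℂ) - (m : ℂ))) • (a * b)),
    (if m = -n then ((m : ℂ) ^ 3 - (m : ℂ)) / 12 else 0) • (a * b))

/-- The bracket of the loop-Virasoro algebra `Vir_B = Vir ⊗ B`; `C ⊗ B` is central. -/
def lvirBracket (x y : LVir B) : LVir B :=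
  x.1.sum fun m a => y.1.sum fun n b => ldBracket B m n a b

/-- Action of `d_n` on `V_{α,β}` -/
def dAct (α β : ℂ) (n : ℤ) : Module.End ℂ (ℤ →₀ ℂ) :=
  Finsupp.lsum ℂ fun k => (α + (k : ℂ) + (n : ℂ) * β) • Finsupp.lsingle (k + n)

/-- Action of `Vir_B` on `V_{α,β,ψ}`:  `(d_n ⊗ b) · v_k = ψ(b)(α + k + nβ) v_{k+n}`,
`(C ⊗ b) · v_k = 0`. -/
def lAction (α β : ℂ) (ψ : B →ₐ[ℂ] ℂ) : LVir B →ₗ[ℂ] Module.End ℂ (ℤ →₀ ℂ) :=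
  (Finsupp.lsum ℂ fun n =>
      (LinearMap.toSpanSingleton ℂ (Module.End ℂ (ℤ →₀ ℂ)) (dAct α β n)).comp ψ.toLinearMap).comp
    (LinearMap.fst ℂ (ℤ →₀ B) B)

def ActInvariant {L V : Type*} [AddCommGroup V] [Module ℂ V]
    (act : L → Module.End ℂ V) (U : Submodule ℂ V) : Prop :=
  ∀ x : L, ∀ v ∈ U, act x v ∈ U

def ActIrreducible {L V : Type*} [AddCommGroup V] [Module ℂ V]
    (act : L → Module.End ℂ V) : Prop :=
  ∀ U : Submodule ℂ V, ActInvariant act U → U = ⊥ ∨ U = ⊤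

def ActGenerates {L V : Type*} [AddCommGroup V] [Module ℂ V]
    (act : L → Module.End ℂ V) (S : Set V) : Prop :=
  ∀ U : Submodule ℂ V, ActInvariant act U → S ⊆ U → U = ⊤

/-- Data of the irreducible highest weight `Vir_B`-module `V(φ)` attached to a one-dimensional
representation `φ` of `Vir⁰_B` (given by its values `φd b = φ(d_0 ⊗ b)`, `φC b = φ(C ⊗ b)`),
with highest weight vector `hv = v_φ`. -/
structure HWRep (B : Type*) [CommRing B] [Algebra ℂ B]
    (W : Type*) [AddCommGroup W] [Module ℂ W] where
  ρ : LVir B →ₗ[ℂ] Module.End ℂ W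
  rep : ∀ x y : LVir B, ρ (lvirBracket B x y) = ρ x * ρ y - ρ y * ρ x
  hv : W
  hv_ne : hv ≠ 0
  φd : B →ₗ[ℂ] ℂ
  φC : B →ₗ[ℂ] ℂ
  hw : ∀ n : ℤ, 0 < n → ∀ b : B, ρ (Finsupp.single n b, 0) hv = 0
  wt0 : ∀ b : B, ρ (Finsupp.single 0 b, 0) hv = φd b • hv
  cen : ∀ b : B, ρ (0, b) hv = φC b • hv
  gen : ActGenerates (fun x => ρ x) {hv}
  irr : ActIrreducible (fun x => ρ x)

/-- The tensor product module `V^φ_{α,β,ψ} = V(φ) ⊗ V'_{α,β,ψ}`. -/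
def tensAct {W : Type*} [AddCommGroup W] [Module ℂ W] (D : HWRep B W)
    (α β : ℂ) (ψ : B →ₐ[ℂ] ℂ) (x : LVir B) : Module.End ℂ (W ⊗[ℂ] (ℤ →₀ ℂ)) :=
  TensorProduct.map (D.ρ x) LinearMap.id + TensorProduct.map LinearMap.id (lAction B α β ψ x)

section Bracket

variable {B}

lemma ldBracket_zero_left (m n : ℤ) (c : B) : ldBracket B m n 0 c = 0 := by
  simp [ldBracket, Prod.ext_iff]

lemma ldBracket_zero_right (m n : ℤ) (a : B) : ldBracket B m n a 0 = 0 := by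
  simp [ldBracket, Prod.ext_iff]

lemma lvirBracket_single_single (m n : ℤ) (a c : B) :
    lvirBracket B (single m a, 0) (single n c, 0) = ldBracket B m n a c := by
  simp [lvirBracket, ldBracket_zero_left, ldBracket_zero_right]

lemma lvirBracket_central_left (c : B) (y : LVir B) : lvirBracket B (0, c) y = 0 := by
  simp [lvirBracket]

lemma ldBracket_eq_smul_add_smul (m n : ℤ) (a c : B) :
    ldBracket B m n a c =
      ((n : ℂ) - m) • ((single (m + n) (a * c), 0) : LVir B) +
        (if m = -n then ((m : ℂ) ^ 3 - m) / 12 else 0) • ((0, a * c) : LVir B) := by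
  simp only [ldBracket, Prod.smul_mk, Prod.mk_add_mk, smul_zero, add_zero, zero_add, smul_single]

end Bracket

namespace HWRep

variable {B} {W : Type*} [AddCommGroup W] [Module ℂ W]
  (D : HWRep B W)

def dOp (n : ℤ) (a : B) : Module.End ℂ W := D.ρ (single n a, 0)

def cOp (a : B) : Module.End ℂ W := D.ρ (0, a)

lemma dOp_hv_of_pos {n : ℤ} (hn : 0 < n) (a : B) : D.dOp n a D.hv = 0 := D.hw n hn a

lemma dOp_zero_hv (a : B) : D.dOp 0 a D.hv = D.φd a • D.hv := D.wt0 a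

lemma cOp_hv (a : B) : D.cOp a D.hv = D.φC a • D.hv := D.cen a

lemma dOp_comm (m n : ℤ) (a c : B) (v : W) :
    D.dOp m a (D.dOp n c v) =
      D.dOp n c (D.dOp m a v) + ((n : ℂ) - m) • D.dOp (m + n) (a * c) v +
        (if m = -n then ((m : ℂ) ^ 3 - m) / 12 else 0) • D.cOp (a * c) v := by
  have h := congrArg (· v) (D.rep (single m a, 0) (single n c, 0))
  simp only [lvirBracket_single_single, ldBracket_eq_smul_add_smul, map_add, map_smul,
    LinearMap.add_apply, LinearMap.smul_apply, LinearMap.sub_apply, Module.End.mul_apply] at h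
  simp only [dOp, cOp]
  rw [sub_eq_iff_eq_add'.mp h.symm, add_assoc]

lemma cOp_dOp_comm (c : B) (n : ℤ) (a : B) (v : W) :
    D.cOp c (D.dOp n a v) = D.dOp n a (D.cOp c v) := by
  have h := D.rep (0, c) (single n a, 0)
  rw [lvirBracket_central_left, map_zero] at h
  exact congrArg (· v) (sub_eq_zero.mp h.symm)

lemma dOp_zero_one_dOp (n : ℤ) (a : B) (v : W) :
    D.dOp 0 1 (D.dOp n a v) = D.dOp n a (D.dOp 0 1 v) + (n : ℂ) • D.dOp n a v := by
  simpa using D.dOp_comm 0 n 1 a v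

lemma actInvariant_of_dOp_cOp {U : Submodule ℂ W}
    (hd : ∀ n a, ∀ v ∈ U, D.dOp n a v ∈ U) (hc : ∀ a, ∀ v ∈ U, D.cOp a v ∈ U) :
    ActInvariant (fun x => D.ρ x) U := by
  have hmodes : ∀ f : ℤ →₀ B, ∀ v ∈ U, D.ρ (f, 0) v ∈ U := by
    intro f
    induction f using Finsupp.induction_linear with
    | zero =>
      intro v _
      rw [Prod.mk_zero_zero, map_zero]
      exact U.zero_mem
    | add f g hf hg =>
      intro v hv
      rw [← add_zero (0 : B), ← Prod.mk_add_mk, map_add]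
      exact U.add_mem (hf v hv) (hg v hv)
    | single n a => exact hd n a
  rintro ⟨f, c⟩ v hv
  change D.ρ _ v ∈ U
  rw [← add_zero f, ← zero_add c, ← Prod.mk_add_mk, map_add]
  exact U.add_mem (hmodes f v hv) (hc c v hv)

variable {D} {b : B}

lemma dOp_pos_dOp_neg_one_hv (hφ : ∀ a ∈ Ideal.span {b}, D.φd a = 0) {k : ℤ} (hk : 0 < k)
    (a : B) {c : B} (hc : c ∈ Ideal.span {b}) :
    D.dOp k a (D.dOp (-1) c D.hv) = 0 := by
  rw [D.dOp_comm, D.dOp_hv_of_pos hk, map_zero, zero_add]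
  obtain rfl | hk1 := eq_or_ne k 1
  · have hφac : D.dOp 0 (a * c) D.hv = 0 := by
      rw [dOp_zero_hv, hφ _ (Ideal.mul_mem_left _ a hc), zero_smul]
    norm_num [hφac]
  · rw [D.dOp_hv_of_pos (by omega : 0 < k + -1), if_neg (by omega)]
    simp

lemma dOp_zero_dOp_neg_one_hv (a c : B) :
    D.dOp 0 a (D.dOp (-1) c D.hv) = D.φd a • D.dOp (-1) c D.hv - D.dOp (-1) (a * c) D.hv := by
  rw [D.dOp_comm, dOp_zero_hv, map_smul, if_neg (by norm_num)]
  simp only [zero_add, Int.cast_neg, Int.cast_one, Int.cast_zero, zero_smul, add_zero]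
  module

variable (D b)

/-- `IsDescendant D b u m`: `u = (d_{n₁} ⊗ a₁) ⋯ (d_{n_r} ⊗ a_r) (d_{-1} ⊗ c) v_φ` with all
`nᵢ < 0` and `c ∈ ⟨b⟩`, where `m = n₁ + ⋯ + n_r - 1`. -/
inductive IsDescendant : W → ℤ → Prop
  | base (c : B) (hc : c ∈ Ideal.span {b}) : IsDescendant (D.dOp (-1) c D.hv) (-1)
  | negMode {n : ℤ} (hn : n < 0) (a : B) {u : W} {m : ℤ} (h : IsDescendant u m) :
      IsDescendant (D.dOp n a u) (m + n)

def descendants : Submodule ℂ W :=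
  Submodule.span ℂ {u | ∃ m, IsDescendant D b u m}

variable {D b}

lemma IsDescendant.weight_neg {u : W} {m : ℤ} (h : IsDescendant D b u m) : m < 0 := by
  induction h <;> omega

lemma IsDescendant.dOp_zero_one {u : W} {m : ℤ} (h : IsDescendant D b u m) :
    D.dOp 0 1 u = (D.φd 1 + m) • u := by
  induction h with
  | base c hc =>
    rw [dOp_zero_one_dOp, dOp_zero_hv, map_smul]
    push_cast
    module
  | negMode hn a h ih =>
    rw [dOp_zero_one_dOp, ih, map_smul]
    push_cast
    module

lemma IsDescendant.cOp {u : W} {m : ℤ} (h : IsDescendant D b u m) (a : B) :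
    D.cOp a u = D.φC a • u := by
  induction h with
  | base c hc => rw [cOp_dOp_comm, cOp_hv, map_smul]
  | negMode hn a' h ih => rw [cOp_dOp_comm, ih, map_smul]

lemma IsDescendant.mem_descendants {u : W} {m : ℤ} (h : IsDescendant D b u m) :
    u ∈ D.descendants b :=
  Submodule.subset_span ⟨m, h⟩

lemma apply_mem_descendants {f : Module.End ℂ W}
    (hf : ∀ u m, IsDescendant D b u m → f u ∈ D.descendants b) {v : W}
    (hv : v ∈ D.descendants b) : f v ∈ D.descendants b :=
  (Submodule.map_span_le f _ _).mpr (by rintro u ⟨m, hu⟩; exact hf u m hu)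
    (Submodule.mem_map_of_mem hv)

lemma dOp_neg_mem_descendants {n : ℤ} (hn : n < 0) (a : B) {v : W}
    (hv : v ∈ D.descendants b) : D.dOp n a v ∈ D.descendants b :=
  apply_mem_descendants (fun _ _ hu => (hu.negMode hn a).mem_descendants) hv

lemma IsDescendant.dOp_mem_descendants (hφ : ∀ a ∈ Ideal.span {b}, D.φd a = 0) {u : W}
    {m : ℤ} (h : IsDescendant D b u m) (k : ℤ) (a : B) : D.dOp k a u ∈ D.descendants b := by
  induction h generalizing k a with
  | base c hc =>
    rcases lt_trichotomy k 0 with hk | rfl | hk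
    · exact ((IsDescendant.base c hc).negMode hk a).mem_descendants
    · rw [dOp_zero_dOp_neg_one_hv]
      exact Submodule.sub_mem _ (Submodule.smul_mem _ _ (IsDescendant.base c hc).mem_descendants)
        (IsDescendant.base _ (Ideal.mul_mem_left _ a hc)).mem_descendants
    · rw [dOp_pos_dOp_neg_one_hv hφ hk a hc]
      exact Submodule.zero_mem _
  | @negMode n hn a₀ u m h ih =>
    rw [D.dOp_comm, h.cOp]
    exact Submodule.add_mem _ (Submodule.add_mem _ (dOp_neg_mem_descendants hn a₀ (ih k a))
      (Submodule.smul_mem _ _ (ih _ _)))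
      (Submodule.smul_mem _ _ (Submodule.smul_mem _ _ h.mem_descendants))

lemma descendants_actInvariant (hφ : ∀ a ∈ Ideal.span {b}, D.φd a = 0) :
    ActInvariant (fun x => D.ρ x) (D.descendants b) :=
  D.actInvariant_of_dOp_cOp
    (fun k a _ hv => apply_mem_descendants (fun _ _ hu => hu.dOp_mem_descendants hφ k a) hv)
    (fun a _ hv => apply_mem_descendants
      (fun _ _ hu => hu.cOp a ▸ Submodule.smul_mem _ _ hu.mem_descendants) hv)

lemma descendants_le_iSup_eigenspace :
    D.descendants b ≤ ⨆ (μ : ℂ) (_ : μ ≠ D.φd 1), (D.dOp 0 1).eigenspace μ := by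
  refine Submodule.span_le.mpr fun u ⟨m, hu⟩ => ?_
  have hμ : D.φd 1 + m ≠ D.φd 1 := by
    simpa using hu.weight_neg.ne
  exact Submodule.mem_iSup_of_mem _ <| Submodule.mem_iSup_of_mem hμ <|
    Module.End.mem_eigenspace_iff.mpr hu.dOp_zero_one

lemma hv_notMem_descendants : D.hv ∉ D.descendants b := fun hmem =>
  D.hv_ne <| Submodule.disjoint_def.mp ((D.dOp 0 1).eigenspaces_iSupIndep (D.φd 1)) D.hv
    (Module.End.mem_eigenspace_iff.mpr (D.wt0 1)) (descendants_le_iSup_eigenspace hmem)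

end HWRep

theorem dminus1_kills_hv {W : Type*} [AddCommGroup W] [Module ℂ W]
    (D : HWRep B W) (b : B)
    (hφ : ∀ a ∈ Ideal.span {b}, D.φd a = 0) :
    D.ρ (Finsupp.single (-1 : ℤ) b, 0) D.hv = 0 := by
  have hw : D.dOp (-1) b D.hv ∈ D.descendants b :=
    (HWRep.IsDescendant.base b (Ideal.mem_span_singleton_self b)).mem_descendants
  rcases D.irr _ (HWRep.descendants_actInvariant hφ) with h | h
  · simpa [h, HWRep.dOp] using hw
  · exact absurd (h ▸ Submodule.mem_top) HWRep.hv_notMem_descendants
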